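/- arXiv:1508.01256 — 2 statements merged into one kernel-verified Lean document; each statement's English description precedes it below -/
import Mathlib

section
/- Let x ∈ ℝ^n be dissociated and A ∈ {0,1}^{m×n} be binary with exactly d ones per column. Then for every nonzero value ω, the number of rows i ∈ [m] with (Ax)_i = ω is at most d. -/
def Dissociated {n : ℕ} (x : Fin n → ℝ) : Prop :=
  ∀ T₁ T₂ : Finset (Fin n), (∀ j ∈ T₁, x j ≠ 0) → (∀ j ∈ T₂, x j ≠ 0) → T₁ ≠ T₂ →
    ∑ j ∈ T₁, x j ≠ ∑ j ∈ T₂, x j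

/-!
If `x` is dissociated, a nonzero entry `(A x)_i` determines the set `T_i` of columns `j` with
`A i j = 1` and `x j ≠ 0`, since `(A x)_i` is the sum of `x` over `T_i`. Hence all rows attaining a
given `ω ≠ 0` share one nonempty `T`, and they all lie in the support of any column `j ∈ T`, which
has `d` elements.
-/

namespace Matrix

variable {ι κ R : Type*} [Fintype κ] [Semiring R] [DecidableEq R]

def rowSupport (A : Matrix ι κ R) (x : κ → R) (i : ι) : Finset κ :=
  Finset.univ.filter fun j => A i j = 1 ∧ x j ≠ 0

theorem mulVec_eq_sum_rowSupport {A : Matrix ι κ R} (hbin : ∀ i j, A i j = 0 ∨ A i j = 1)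
    (x : κ → R) (i : ι) : (A *ᵥ x) i = ∑ j ∈ rowSupport A x i, x j := by
  rw [mulVec, dotProduct, ← Finset.sum_filter_ne_zero]
  refine Finset.sum_congr ?_ fun j hj => ?_
  · ext j
    rcases hbin i j with h | h
    · have h01 : (0 : R) = 1 → x j = 0 := fun h01 => by simpa using congrArg (· * x j) h01.symm
      simpa [rowSupport, h]
    · simp [rowSupport, h]
  · rw [(Finset.mem_filter.mp hj).2.1, one_mul]

theorem rowSupport_nonempty {A : Matrix ι κ R} (hbin : ∀ i j, A i j = 0 ∨ A i j = 1)
    {x : κ → R} {i : ι} (h : (A *ᵥ x) i ≠ 0) : (rowSupport A x i).Nonempty := by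
  rw [Finset.nonempty_iff_ne_empty]
  rintro hempty
  rw [mulVec_eq_sum_rowSupport hbin, hempty, Finset.sum_empty] at h
  exact h rfl

end Matrix

open Matrix

theorem Dissociated.eq_of_sum_eq {n : ℕ} {x : Fin n → ℝ} (hx : Dissociated x)
    {T₁ T₂ : Finset (Fin n)} (h₁ : ∀ j ∈ T₁, x j ≠ 0) (h₂ : ∀ j ∈ T₂, x j ≠ 0)
    (h : ∑ j ∈ T₁, x j = ∑ j ∈ T₂, x j) : T₁ = T₂ :=
  not_ne_iff.mp fun hne => hx T₁ T₂ h₁ h₂ hne h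

theorem Dissociated.rowSupport_eq_of_mulVec_eq {ι : Type*} {n : ℕ} {x : Fin n → ℝ}
    (hx : Dissociated x) {A : Matrix ι (Fin n) ℝ} (hbin : ∀ i j, A i j = 0 ∨ A i j = 1)
    {i i' : ι} (h : (A *ᵥ x) i = (A *ᵥ x) i') : rowSupport A x i = rowSupport A x i' := by
  have hsupp : ∀ k, ∀ j ∈ rowSupport A x k, x j ≠ 0 := fun k j hj => (Finset.mem_filter.mp hj).2.2
  refine hx.eq_of_sum_eq (hsupp i) (hsupp i') ?_
  rwa [← mulVec_eq_sum_rowSupport hbin, ← mulVec_eq_sum_rowSupport hbin]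

theorem stmt3 {m n d : ℕ} (x : Fin n → ℝ) (hx : Dissociated x)
    (A : Matrix (Fin m) (Fin n) ℝ)
    (hbin : ∀ i j, A i j = 0 ∨ A i j = 1)
    (hcol : ∀ j : Fin n, (Finset.univ.filter (fun i : Fin m => A i j = 1)).card = d)
    (ω : ℝ) (hω : ω ≠ 0) :
    (Finset.univ.filter (fun i : Fin m => A.mulVec x i = ω)).card ≤ d := by
  rcases (Finset.univ.filter fun i : Fin m => A.mulVec x i = ω).eq_empty_or_nonempty
    with hempty | ⟨i₀, hi₀⟩
  · simp [hempty]
  have hi₀ : (A *ᵥ x) i₀ = ω := (Finset.mem_filter.mp hi₀).2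
  obtain ⟨j₀, hj₀⟩ := rowSupport_nonempty hbin (hi₀ ▸ hω)
  have hsub : (Finset.univ.filter fun i : Fin m => A.mulVec x i = ω) ⊆
      Finset.univ.filter fun i : Fin m => A i j₀ = 1 := by
    intro i hi
    have hsupp := hx.rowSupport_eq_of_mulVec_eq hbin ((Finset.mem_filter.mp hi).2.trans hi₀.symm)
    rw [← hsupp] at hj₀
    exact Finset.mem_filter.mpr ⟨Finset.mem_univ i, (Finset.mem_filter.mp hj₀).2.1⟩
  exact (Finset.card_le_card hsub).trans (hcol j₀).le
end

section
/- Let G be a (k, ε, d)-expander with ε ≤ 1/4, S a set of left nodes with 0 < |S| ≤ k, and partition S = T ∪ (S∖T) where T is the set of j ∈ S whose column sees at least α = (1−2ε)d unique neighbors in N₁(S). If each node in S∖T contributes at most ⌊α⌋ nodes to N₁(S) (when α ∉ ℕ), then |T| ≥ ((1 − 2εd + ⌊2εd⌋)/(1 + ⌊2εd⌋))·|S|. -/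
/-!
Write `m = ⌊2εd⌋`. Since `α = d - 2εd` is not an integer, neither is `2εd`, so `⌊α⌋ = d - m - 1`.
Then `(1 - 2ε)d·s < a + b ≤ d·t + (d - m - 1)(s - t)`, which rearranges to
`(1 - 2εd + m)·s < (1 + m)·t`, and `1 + m > 0`.
-/

theorem Int.floor_intCast_sub_of_fract_ne_zero {R : Type*} [Ring R] [LinearOrder R]
    [IsStrictOrderedRing R] [FloorRing R] (n : ℤ) {x : R} (h : Int.fract ((n : R) - x) ≠ 0) :
    ⌊(n : R) - x⌋ = n - ⌊x⌋ - 1 := by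
  have hx : x ∉ Set.range Int.cast := by
    rintro ⟨k, rfl⟩
    exact h (by exact_mod_cast Int.fract_intCast (n - k))
  rw [sub_eq_neg_add, Int.floor_add_intCast, Int.floor_neg,
    (Int.ceil_eq_floor_add_one_iff_notMem x).2 hx]
  ring

/-- Here `s = |S|`, `t = |T|`, `a = |N₁^S(T)|` and `b = |N₁^S(S∖T)|`. -/
theorem stmt11_general (d : ℕ) (ε : ℝ) (hε0 : 0 < ε)
    (α : ℝ) (hα : α = (1 - 2 * ε) * d) (hαnotint : Int.fract α ≠ 0)
    (s t a b : ℕ) (hts : t ≤ s)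
    (hN1 : (1 - 2 * ε) * d * s < (a : ℝ) + b)
    (ha : (a : ℝ) ≤ d * t)
    (hb : (b : ℝ) ≤ (⌊α⌋ : ℝ) * ((s : ℝ) - t)) :
    ((1 - 2 * ε * d + (⌊2 * ε * (d : ℝ)⌋ : ℝ)) / (1 + (⌊2 * ε * (d : ℝ)⌋ : ℝ))) * s
      ≤ (t : ℝ) := by
  set m : ℤ := ⌊2 * ε * (d : ℝ)⌋
  have hm : (0 : ℝ) ≤ m := by exact_mod_cast Int.floor_nonneg.2 (by positivity)
  have hα' : α = ((d : ℤ) : ℝ) - 2 * ε * d := by rw [hα, Int.cast_natCast]; ring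
  have hfloor : (⌊α⌋ : ℝ) = d - m - 1 := by
    rw [hα'] at hαnotint ⊢
    rw [Int.floor_intCast_sub_of_fract_ne_zero _ hαnotint]
    push_cast
    rfl
  have hst : (0 : ℝ) ≤ s - t := sub_nonneg.2 (by exact_mod_cast hts)
  have key : (1 - 2 * ε * d + m) * s < (1 + m) * t :=
    calc (1 - 2 * ε * d + m) * s = (1 - 2 * ε) * d * s - (d - m - 1) * s := by ring
      _ < a + b - (d - m - 1) * s := by gcongr
      _ ≤ d * t + (d - m - 1) * (s - t) - (d - m - 1) * s := by rw [← hfloor]; gcongr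
      _ = (1 + m) * t := by ring
  rw [div_mul_eq_mul_div, div_le_iff₀ (by positivity)]
  linarith

/-- Abstract counting form of formula (eq:TvsS-notin-expanded) in the convergence
proof of Parallel-ℓ₀.  Here `s = |S|`, `t = |T|`, `a = |N₁^S(T)|`,
`b = |N₁^S(S∖T)|`, and `α = (1-2ε)d` is not an integer. -/
theorem stmt11 (d : ℕ) (ε : ℝ) (hε0 : 0 < ε) (hε : ε ≤ 1 / 4)
    (α : ℝ) (hα : α = (1 - 2 * ε) * d) (hαnotint : Int.fract α ≠ 0)
    (s t a b : ℕ) (hs : 0 < s) (hts : t ≤ s)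
    (hN1 : (1 - 2 * ε) * d * s < (a : ℝ) + b)
    (ha : (a : ℝ) ≤ d * t)
    (hb : (b : ℝ) ≤ (⌊α⌋ : ℝ) * ((s : ℝ) - t)) :
    ((1 - 2 * ε * d + (⌊2 * ε * (d : ℝ)⌋ : ℝ)) / (1 + (⌊2 * ε * (d : ℝ)⌋ : ℝ))) * s
      ≤ (t : ℝ) :=
  stmt11_general d ε hε0 α hα hαnotint s t a b hts hN1 ha hb
end
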